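/- arXiv:1010.2759 — 3 statements merged into one kernel-verified Lean document; each statement's English description precedes it below -/
import Mathlib

section
/- Let c, λ, v, w₁ be real numbers with c² - 1 < 0 and λ² - (c²-1) > 0, and let γ_s = (-cλ + sqrt(λ² - (c²-1)))/(c²-1). If w₂ = ((λ² + 1)/(γ_s (c²-1))) w₁, then the crossing form Γ = ((cos v - λ²)/(c²-1)) w₁² - (2cλ/(c²-1)) w₁ w₂ - w₂² equals ((cos v + 1) w₁²)/(c²-1); in particular Γ is independent of λ. -/
/-!
On the stable line the slope `μ = w₂ / w₁` is a root of the characteristic polynomial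
`(c² - 1) μ² + 2cλ μ + (λ² + 1)` of the asymptotic system at the rest state `cos v = -1`:
the given formula `(λ² + 1) / (γ_s (c² - 1))` is that root by Vieta, `γ_s` being the other one.
Substituting `w₂ = μ w₁` into `Γ` and using the root equation to eliminate `μ` leaves
`(cos v + 1) w₁² / (c² - 1)`.
-/

namespace SineGordon

variable {a β e s : ℝ}

theorem quadratic_root_of_sq_eq (ha : a ≠ 0) (hs : s ^ 2 = β ^ 2 - a * e) :
    a * ((-β - s) / a) ^ 2 + 2 * β * ((-β - s) / a) + e = 0 := by
  field_simp
  linear_combination hs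

theorem quadratic_roots_mul (ha : a ≠ 0) (hs : s ^ 2 = β ^ 2 - a * e) :
    (-β + s) / a * a * ((-β - s) / a) = e := by
  field_simp
  linear_combination -hs

theorem quadratic_const_div_eq_other_root (ha : a ≠ 0) (he : e ≠ 0)
    (hs : s ^ 2 = β ^ 2 - a * e) :
    e / ((-β + s) / a * a) = (-β - s) / a := by
  have hγ : (-β + s) / a * a ≠ 0 := by
    intro h
    rw [← quadratic_roots_mul ha hs, h, zero_mul] at he
    exact he rfl
  rw [div_eq_iff hγ, ← quadratic_roots_mul ha hs]
  ring

theorem crossingForm_eq_of_slope_isRoot {c lam k w μ : ℝ} (hc : c ^ 2 - 1 ≠ 0)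
    (hμ : (c ^ 2 - 1) * μ ^ 2 + 2 * (c * lam) * μ + (lam ^ 2 + 1) = 0) :
    ((k - lam ^ 2) / (c ^ 2 - 1)) * w ^ 2 - (2 * c * lam / (c ^ 2 - 1)) * w * (μ * w)
        - (μ * w) ^ 2 = ((k + 1) * w ^ 2) / (c ^ 2 - 1) := by
  field_simp
  linear_combination -w ^ 2 * hμ

end SineGordon

open SineGordon in
theorem stmt_2 (c lam v w₁ w₂ : ℝ) (hc : c^2 - 1 < 0) (hlam : lam^2 - (c^2 - 1) > 0)
    (γs : ℝ) (hγs : γs = (-c*lam + Real.sqrt (lam^2 - (c^2 - 1)))/(c^2 - 1))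
    (hw₂ : w₂ = ((lam^2 + 1)/(γs * (c^2 - 1))) * w₁) :
    ((Real.cos v - lam^2)/(c^2 - 1)) * w₁^2 - (2*c*lam/(c^2 - 1)) * w₁ * w₂ - w₂^2
      = ((Real.cos v + 1) * w₁^2)/(c^2 - 1) := by
  have hd : c ^ 2 - 1 ≠ 0 := hc.ne
  have hdisc : Real.sqrt (lam ^ 2 - (c ^ 2 - 1)) ^ 2
      = (c * lam) ^ 2 - (c ^ 2 - 1) * (lam ^ 2 + 1) := by
    rw [Real.sq_sqrt hlam.le]
    ring
  rw [hw₂, hγs, neg_mul, quadratic_const_div_eq_other_root hd (by positivity) hdisc]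
  exact crossingForm_eq_of_slope_isRoot hd (quadratic_root_of_sq_eq hd hdisc)
end

section
/- Let c > 1 and let λ ∈ ℂ with Re λ > 0. Then both characteristic exponents r_{1,2} = (cλ ± sqrt(λ² + (1-c²)))/(1-c²) of the asymptotic equation (1-c²)φ'' - 2cλφ' - (λ²+1)φ = 0 have limits as c → 1⁺ whose real parts are negative: lim_{c→1⁺} Re r₁ has the sign of -Re(2λ) and lim_{c→1⁺} Re r₂ has the sign of -Re(λ + 1/λ). -/
/-!
At `c = 1` the discriminant `λ² + 1 - c²` equals `λ²`, whose principal square root is `λ`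
because `Re λ > 0`. Hence the numerator `cλ + √(λ² + 1 - c²)` of `r₁` tends to `2λ` while the
real denominator `1 - c²` tends to `0` from below, so `Re r₁ → -∞`. For `r₂` numerator and
denominator both vanish; multiplying by the conjugate `cλ + √(λ² + 1 - c²)` gives
`r₂ = -(λ² + 1) / (cλ + √(λ² + 1 - c²)) → -(λ² + 1) / (2λ) = -(λ + 1/λ) / 2`.
-/

open Filter Topology

namespace Complex

theorem sq_mem_slitPlane_of_re_pos {z : ℂ} (hz : 0 < z.re) : z ^ 2 ∈ slitPlane := by
  rw [mem_slitPlane_iff]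
  rcases eq_or_ne z.im 0 with h | h
  · left
    simp only [sq, mul_re, h, mul_zero, sub_zero]
    positivity
  · right
    simp only [sq, mul_im]
    rw [mul_comm z.im z.re, ← two_mul, ← mul_assoc]
    positivity

theorem tendsto_cpow_one_half_nhds_sq {z : ℂ} (hz : 0 < z.re) :
    Tendsto (· ^ ((1 : ℂ) / 2)) (𝓝 (z ^ 2)) (𝓝 z) := by
  have h := (continuousAt_cpow_const (b := (1 : ℂ) / 2) (sq_mem_slitPlane_of_re_pos hz)).tendsto
  rwa [one_div, sq_cpow_two_inv hz, ← one_div] at h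

theorem re_add_inv_pos {z : ℂ} (hz : 0 < z.re) : 0 < (z + z⁻¹).re := by
  have : 0 < normSq z := normSq_pos.2 (by rintro rfl; simp at hz)
  rw [add_re, inv_re]
  positivity

theorem tendsto_re_div_ofReal_atBot {α : Type*} {l : Filter α} {f : α → ℂ} {g : α → ℝ} {a : ℂ}
    (hf : Tendsto f l (𝓝 a)) (ha : 0 < a.re) (hg : Tendsto g l (𝓝[<] 0)) :
    Tendsto (fun x => (f x / g x).re) l atBot := by
  simp_rw [div_ofReal_re, div_eq_mul_inv]
  exact ((continuous_re.tendsto a).comp hf).pos_mul_atBot ha (tendsto_inv_nhdsLT_zero.comp hg)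

end Complex

theorem sub_div_eq_neg_div_add_of_sq_eq {K : Type*} [Field K] {a s d e : K}
    (hs : s ^ 2 = a ^ 2 + d * e) (hd : d ≠ 0) (has : a + s ≠ 0) :
    (a - s) / d = -e / (a + s) := by
  rw [div_eq_div_iff hd has]
  linear_combination -hs

theorem tendsto_one_sub_sq_nhdsGT_one : Tendsto (fun c : ℝ => 1 - c ^ 2) (𝓝[>] 1) (𝓝[<] 0) := by
  refine tendsto_nhdsWithin_of_tendsto_nhds_of_eventually_within _ ?_ ?_
  · have : Continuous fun c : ℝ => 1 - c ^ 2 := by fun_prop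
    simpa using this.continuousWithinAt.tendsto (x := 1) (s := Set.Ioi 1)
  · filter_upwards [self_mem_nhdsWithin] with c (hc : 1 < c)
    simp only [Set.mem_Iio]
    nlinarith

section CharacteristicExponents

variable {lam : ℂ}

theorem tendsto_sqrt_discriminant (hre : 0 < lam.re) :
    Tendsto (fun c : ℝ => (lam ^ 2 + (1 - (c : ℂ) ^ 2)) ^ ((1 : ℂ) / 2)) (𝓝 1) (𝓝 lam) := by
  refine (Complex.tendsto_cpow_one_half_nhds_sq hre).comp ?_
  have : Continuous fun c : ℝ => lam ^ 2 + (1 - (c : ℂ) ^ 2) := by fun_prop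
  simpa using this.tendsto 1

theorem tendsto_add_sqrt_discriminant (hre : 0 < lam.re) :
    Tendsto (fun c : ℝ => (c : ℂ) * lam + (lam ^ 2 + (1 - (c : ℂ) ^ 2)) ^ ((1 : ℂ) / 2))
      (𝓝 1) (𝓝 (2 * lam)) := by
  have hc : Tendsto (fun c : ℝ => (c : ℂ) * lam) (𝓝 1) (𝓝 lam) := by
    have : Continuous fun c : ℝ => (c : ℂ) * lam := by fun_prop
    simpa using this.tendsto 1
  simpa [two_mul] using hc.add (tendsto_sqrt_discriminant hre)

end CharacteristicExponents

theorem stmt_13 (lam : ℂ) (hre : 0 < lam.re) :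
    Tendsto (fun c : ℝ =>
        ((((c : ℂ)*lam + (lam^2 + (1 - (c : ℂ)^2)) ^ ((1 : ℂ)/2)) / (1 - (c : ℂ)^2)).re))
      (nhdsWithin 1 (Set.Ioi 1)) atBot ∧
    Tendsto (fun c : ℝ =>
        (((c : ℂ)*lam - (lam^2 + (1 - (c : ℂ)^2)) ^ ((1 : ℂ)/2)) / (1 - (c : ℂ)^2)))
      (nhdsWithin 1 (Set.Ioi 1)) (nhds (-(lam + 1/lam)/2)) ∧
    (-(lam + 1/lam)/2).re < 0 := by
  have hlam : lam ≠ 0 := by rintro rfl; simp at hre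
  have hnum := (tendsto_add_sqrt_discriminant hre).mono_left (nhdsWithin_le_nhds (s := Set.Ioi 1))
  refine ⟨?_, ?_, ?_⟩
  · have h2re : 0 < (2 * lam).re := by simpa using hre
    simpa using Complex.tendsto_re_div_ofReal_atBot hnum h2re tendsto_one_sub_sq_nhdsGT_one
  · have h2lam : 2 * lam ≠ 0 := mul_ne_zero two_ne_zero hlam
    have hlim : -(lam ^ 2 + 1) / (2 * lam) = -(lam + 1 / lam) / 2 := by field_simp
    rw [← hlim]
    refine (tendsto_const_nhds.div hnum h2lam).congr' ?_
    filter_upwards [self_mem_nhdsWithin, hnum.eventually_ne h2lam] with c (hc : 1 < c) hne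
    have hd : 1 - (c : ℂ) ^ 2 ≠ 0 := by
      rw [← Complex.ofReal_one, ← Complex.ofReal_pow, ← Complex.ofReal_sub, Complex.ofReal_ne_zero]
      nlinarith
    refine (sub_div_eq_neg_div_add_of_sq_eq ?_ hd hne).symm
    rw [one_div, Complex.cpow_ofNat_inv_pow]
    ring
  · have := Complex.re_add_inv_pos hre
    simp only [one_div, Complex.div_ofNat_re, Complex.neg_re]
    linarith
end

section
/- Let c ∈ ℝ with 0 < c² < 1 and let v : ℝ → ℝ be defined by v(z) = 4 arctan( exp( z / sqrt(1-c²) ) ) - π. Then v satisfies (c²-1)v'' = sin v on ℝ, v(z) → -π as z → -∞, v(z) → π as z → +∞, and v'(z) = sqrt( 2(cos(v(z)) + 1)/(1 - c²) ) for all z. -/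
/-!
With `s = √(1 - c²)` and `g = exp (z / s)`, half the kink is `2 arctan g - π/2`, so
`cos (v / 2) = sin (2 arctan g) = 2g / (1 + g²)`, which is exactly `s v' / 2`. Hence `v` solves
the first-order equation `v' = (2 / s) cos (v / 2)`. Differentiating once more gives
`v'' = -(1 / s²) sin v`, and since `v` takes values in `(-π, π)` the half-angle formula turns
`v' = (2 / s) cos (v / 2)` into `v' = √(2 (cos v + 1) / s²)`.
-/

open Real Filter Set

theorem Real.sin_two_mul_arctan (t : ℝ) : sin (2 * arctan t) = 2 * t / (1 + t ^ 2) := by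
  have hq : √(1 + t ^ 2) ^ 2 = 1 + t ^ 2 := sq_sqrt (by positivity)
  rw [sin_two_mul, sin_arctan, cos_arctan]
  field_simp
  rw [hq]

theorem Real.sqrt_two_mul_cos_add_one_div_sq {x s : ℝ} (hx : x ∈ Ioo (-π) π) (hs : 0 < s) :
    √(2 * (cos x + 1) / s ^ 2) = 2 / s * cos (x / 2) := by
  have hcos : 0 ≤ cos (x / 2) :=
    (cos_pos_of_mem_Ioo ⟨by linarith [hx.1], by linarith [hx.2]⟩).le
  rw [show 2 * (cos x + 1) / s ^ 2 = (2 / s) ^ 2 * ((1 + cos x) / 2) by field_simp; ring,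
    sqrt_mul (by positivity), sqrt_sq (by positivity), cos_half hx.1.le hx.2.le]

theorem hasDerivAt_deriv_of_hasDerivAt_mul_cos_half {v : ℝ → ℝ} {k : ℝ}
    (hv : ∀ z, HasDerivAt v (k * cos (v z / 2)) z) (z : ℝ) :
    HasDerivAt (deriv v) (-(k ^ 2 / 4) * sin (v z)) z := by
  have hderiv : deriv v = fun z => k * cos (v z / 2) := funext fun z => (hv z).deriv
  rw [hderiv]
  refine (((hv z).div_const 2).cos.const_mul k).congr_deriv ?_
  rw [show v z = 2 * (v z / 2) by ring, sin_two_mul]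
  ring

noncomputable def kink (s z : ℝ) : ℝ := 4 * arctan (exp (z / s)) - π

theorem kink_mem_Ioo (s z : ℝ) : kink s z ∈ Ioo (-π) π := by
  have hpos : 0 < arctan (exp (z / s)) := arctan_pos.mpr (exp_pos _)
  have hlt : arctan (exp (z / s)) < π / 2 := arctan_lt_pi_div_two _
  constructor <;> unfold kink <;> linarith

theorem cos_kink_div_two (s z : ℝ) :
    cos (kink s z / 2) = 2 * exp (z / s) / (1 + exp (z / s) ^ 2) := by
  rw [kink, show (4 * arctan (exp (z / s)) - π) / 2 = 2 * arctan (exp (z / s)) - π / 2 by ring,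
    cos_sub_pi_div_two, sin_two_mul_arctan]

theorem hasDerivAt_kink (s z : ℝ) : HasDerivAt (kink s) (2 / s * cos (kink s z / 2)) z := by
  have hexp : HasDerivAt (fun z => exp (z / s)) (exp (z / s) * (1 / s)) z :=
    (hasDerivAt_id z).div_const s |>.exp
  refine ((hexp.arctan.const_mul 4).sub_const π).congr_deriv ?_
  rw [cos_kink_div_two]
  ring

theorem tendsto_kink_atBot {s : ℝ} (hs : 0 < s) : Tendsto (kink s) atBot (nhds (-π)) := by
  have harctan : Tendsto (fun z => arctan (exp (z / s))) atBot (nhds 0) := by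
    simpa [Function.comp_def] using (continuous_arctan.tendsto 0).comp
      (tendsto_exp_atBot.comp (tendsto_id.atBot_div_const hs))
  have hkink := (harctan.const_mul 4).sub_const π
  rwa [mul_zero, zero_sub] at hkink

theorem tendsto_kink_atTop {s : ℝ} (hs : 0 < s) : Tendsto (kink s) atTop (nhds π) := by
  have harctan : Tendsto (fun z => arctan (exp (z / s))) atTop (nhds (π / 2)) :=
    (tendsto_nhds_of_tendsto_nhdsWithin tendsto_arctan_atTop).comp
      (tendsto_exp_atTop.comp (tendsto_id.atTop_div_const hs))
  have hkink := (harctan.const_mul 4).sub_const π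
  rwa [show 4 * (π / 2) - π = π by ring] at hkink

theorem stmt_15_general (c : ℝ) (hc1 : c^2 < 1) (v : ℝ → ℝ)
    (hv : v = fun z => 4 * Real.arctan (Real.exp (z / Real.sqrt (1 - c^2))) - π) :
    (∀ z, (c^2 - 1) * deriv (deriv v) z = Real.sin (v z)) ∧
    Tendsto v atBot (nhds (-π)) ∧
    Tendsto v atTop (nhds π) ∧
    (∀ z, deriv v z = Real.sqrt (2 * (Real.cos (v z) + 1) / (1 - c^2))) := by
  set s := √(1 - c ^ 2)
  have hs : 0 < s := sqrt_pos.mpr (by linarith)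
  have hs2 : s ^ 2 = 1 - c ^ 2 := sq_sqrt (by linarith)
  obtain rfl : v = kink s := hv
  refine ⟨fun z => ?_, tendsto_kink_atBot hs, tendsto_kink_atTop hs, fun z => ?_⟩
  · rw [(hasDerivAt_deriv_of_hasDerivAt_mul_cos_half (hasDerivAt_kink s) z).deriv,
      show c ^ 2 - 1 = -s ^ 2 by linarith]
    field_simp
    norm_num
  · rw [(hasDerivAt_kink s z).deriv, ← hs2, sqrt_two_mul_cos_add_one_div_sq (kink_mem_Ioo s z) hs]

theorem stmt_15 (c : ℝ) (hc0 : 0 < c^2) (hc1 : c^2 < 1) (v : ℝ → ℝ)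
    (hv : v = fun z => 4 * Real.arctan (Real.exp (z / Real.sqrt (1 - c^2))) - π) :
    (∀ z, (c^2 - 1) * deriv (deriv v) z = Real.sin (v z)) ∧
    Tendsto v atBot (nhds (-π)) ∧
    Tendsto v atTop (nhds π) ∧
    (∀ z, deriv v z = Real.sqrt (2 * (Real.cos (v z) + 1) / (1 - c^2))) :=
  stmt_15_general c hc1 v hv
end
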